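/- arXiv:1806.06316 — 4 statements merged into one kernel-verified Lean document; each statement's English description precedes it below -/
import Mathlib

section
/- Let G₁, G₂ be compact Lie groups and Z a subgroup of Z(G₁) × Z(G₂) with Z ∩ (Z(G₁) × {1}) = 1 and Z ∩ ({1} × Z(G₂)) = 1. If the quotient (G₁ × G₂)/Z is acceptable, then both G₁ and G₂ are acceptable. -/
/-- A group `G` is *acceptable* if any two element-conjugate homomorphisms from a
finite group into `G` are globally conjugate. -/
def IsAcceptable (G : Type*) [Group G] : Prop :=
  ∀ (Γ : Type) [Group Γ] [Finite Γ], ∀ φ₁ φ₂ : Γ →* G,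
    (∀ x, IsConj (φ₁ x) (φ₂ x)) → ∃ g : G, ∀ x, φ₂ x = g * φ₁ x * g⁻¹

/-- A group `G` is *strongly acceptable* if any two element-conjugate homomorphisms from a
compact group into `G` are globally conjugate. -/
def IsStronglyAcceptable (G : Type*) [Group G] : Prop :=
  ∀ (Γ : Type) [Group Γ] [TopologicalSpace Γ] [IsTopologicalGroup Γ] [CompactSpace Γ],
    ∀ φ₁ φ₂ : Γ →* G,
    (∀ x, IsConj (φ₁ x) (φ₂ x)) → ∃ g : G, ∀ x, φ₂ x = g * φ₁ x * g⁻¹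

/-- A subgroup `H` of `G` *strongly controls its fusion* in `G` if any two homomorphisms
from a compact group into `H` that are conjugate by an element of `G` are already
conjugate by an element of `H`. -/
def StronglyControlsFusion {G : Type*} [Group G] (H : Subgroup G) : Prop :=
  ∀ (Γ : Type) [Group Γ] [TopologicalSpace Γ] [IsTopologicalGroup Γ] [CompactSpace Γ],
    ∀ φ₁ φ₂ : Γ →* H,
    (∃ g : G, ∀ x, (φ₂ x : G) = g * (φ₁ x : G) * g⁻¹) →
    ∃ h : H, ∀ x, φ₂ x = h * φ₁ x * h⁻¹

/-!
If `H` embeds into `G` so that conjugation by every element of `G` restricts to an inner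
automorphism of `H`, then element-conjugacy in `H` implies element-conjugacy in `G`, and a
global conjugator in `G` can be replaced by one in `H`; so `H` inherits acceptability from `G`.
Both `G₁` and `G₂` embed into `(G₁ × G₂) ⧸ Z` in this way: conjugation by `(g₁, g₂)` acts on
`G₁ × 1` as conjugation by `g₁`, and the kernel of `G₁ → (G₁ × G₂) ⧸ Z` consists of the `a`
with `(a, 1) ∈ Z`, which are central and hence trivial by `Z ∩ (Z(G₁) × 1) = 1`.
-/

open Function Subgroup

def ConjRestrictsInner {H G : Type*} [Group H] [Group G] (f : H →* G) : Prop :=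
  ∀ g : G, ∃ h : H, ∀ a, g * f a * g⁻¹ = f (h * a * h⁻¹)

section ConjRestrictsInner

variable {H G K : Type*} [Group H] [Group G] [Group K]

theorem ConjRestrictsInner.comp_of_surjective {f : H →* G} (hf : ConjRestrictsInner f)
    {π : G →* K} (hπ : Surjective π) : ConjRestrictsInner (π.comp f) := by
  intro k
  obtain ⟨g, rfl⟩ := hπ k
  obtain ⟨h, hh⟩ := hf g
  refine ⟨h, fun a => ?_⟩
  simp only [MonoidHom.comp_apply]
  rw [← map_inv, ← map_mul, ← map_mul, hh]

theorem conjRestrictsInner_inl : ConjRestrictsInner (MonoidHom.inl G K) :=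
  fun g => ⟨g.1, fun a => by ext <;> simp⟩

theorem conjRestrictsInner_inr : ConjRestrictsInner (MonoidHom.inr G K) :=
  fun g => ⟨g.2, fun a => by ext <;> simp⟩

theorem IsAcceptable.of_injective (hG : IsAcceptable G) {f : H →* G} (hinj : Injective f)
    (hf : ConjRestrictsInner f) : IsAcceptable H := by
  intro Γ _ _ φ₁ φ₂ hφ
  obtain ⟨g, hg⟩ := hG Γ (f.comp φ₁) (f.comp φ₂) fun x => f.map_isConj (hφ x)
  obtain ⟨h, hh⟩ := hf g
  exact ⟨h, fun x => hinj <| (hg x).trans (hh (φ₁ x))⟩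

end ConjRestrictsInner

section Quotient

variable {G₁ G₂ : Type*} [Group G₁] [Group G₂] (Z : Subgroup (G₁ × G₂)) [Z.Normal]

theorem injective_mk'_comp_inl (hZcentral : Z ≤ center (G₁ × G₂))
    (hZ₁ : Z ⊓ (center G₁).prod ⊥ = ⊥) :
    Injective ((QuotientGroup.mk' Z).comp (MonoidHom.inl G₁ G₂)) := by
  refine (injective_iff_map_eq_one _).2 fun a ha => ?_
  have hZ : ((a, 1) : G₁ × G₂) ∈ Z := (QuotientGroup.eq_one_iff _).1 ha
  have hcenter : a ∈ center G₁ := (Subgroup.center_prod.le (hZcentral hZ)).1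
  have hbot : ((a, 1) : G₁ × G₂) ∈ Z ⊓ (center G₁).prod ⊥ := ⟨hZ, hcenter, rfl⟩
  rw [hZ₁, mem_bot] at hbot
  exact congrArg Prod.fst hbot

theorem injective_mk'_comp_inr (hZcentral : Z ≤ center (G₁ × G₂))
    (hZ₂ : Z ⊓ (⊥ : Subgroup G₁).prod (center G₂) = ⊥) :
    Injective ((QuotientGroup.mk' Z).comp (MonoidHom.inr G₁ G₂)) := by
  refine (injective_iff_map_eq_one _).2 fun a ha => ?_
  have hZ : ((1, a) : G₁ × G₂) ∈ Z := (QuotientGroup.eq_one_iff _).1 ha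
  have hcenter : a ∈ center G₂ := (Subgroup.center_prod.le (hZcentral hZ)).2
  have hbot : ((1, a) : G₁ × G₂) ∈ Z ⊓ (⊥ : Subgroup G₁).prod (center G₂) := ⟨hZ, rfl, hcenter⟩
  rw [hZ₂, mem_bot] at hbot
  exact congrArg Prod.snd hbot

end Quotient

open scoped Manifold

theorem acceptable_of_quotient_product_general
    {G₁ : Type*} [Group G₁]
    {G₂ : Type*} [Group G₂]
    (Z : Subgroup (G₁ × G₂)) [Z.Normal]
    (hZcentral : Z ≤ Subgroup.center (G₁ × G₂))
    (hZ₁ : Z ⊓ (Subgroup.center G₁).prod ⊥ = ⊥)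
    (hZ₂ : Z ⊓ (⊥ : Subgroup G₁).prod (Subgroup.center G₂) = ⊥)
    (hQ : IsAcceptable ((G₁ × G₂) ⧸ Z)) :
    IsAcceptable G₁ ∧ IsAcceptable G₂ :=
  have hπ := QuotientGroup.mk'_surjective Z
  ⟨hQ.of_injective (injective_mk'_comp_inl Z hZcentral hZ₁)
      (conjRestrictsInner_inl.comp_of_surjective hπ),
    hQ.of_injective (injective_mk'_comp_inr Z hZcentral hZ₂)
      (conjRestrictsInner_inr.comp_of_surjective hπ)⟩

/-- If `Z ⊆ Z(G₁) × Z(G₂)` meets both factors trivially and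
`(G₁ × G₂)/Z` is acceptable, then `G₁` and `G₂` are acceptable. -/
theorem acceptable_of_quotient_product
    {E₁ : Type*} [NormedAddCommGroup E₁] [NormedSpace ℝ E₁]
    {E₂ : Type*} [NormedAddCommGroup E₂] [NormedSpace ℝ E₂]
    {G₁ : Type*} [Group G₁] [TopologicalSpace G₁] [IsTopologicalGroup G₁]
    [ChartedSpace E₁ G₁] [LieGroup 𝓘(ℝ, E₁) (⊤ : ℕ∞) G₁] [CompactSpace G₁]
    {G₂ : Type*} [Group G₂] [TopologicalSpace G₂] [IsTopologicalGroup G₂]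
    [ChartedSpace E₂ G₂] [LieGroup 𝓘(ℝ, E₂) (⊤ : ℕ∞) G₂] [CompactSpace G₂]
    (Z : Subgroup (G₁ × G₂)) [Z.Normal]
    (hZcentral : Z ≤ Subgroup.center (G₁ × G₂))
    (hZ₁ : Z ⊓ (Subgroup.center G₁).prod ⊥ = ⊥)
    (hZ₂ : Z ⊓ (⊥ : Subgroup G₁).prod (Subgroup.center G₂) = ⊥)
    (hQ : IsAcceptable ((G₁ × G₂) ⧸ Z)) :
    IsAcceptable G₁ ∧ IsAcceptable G₂ :=
  acceptable_of_quotient_product_general Z hZcentral hZ₁ hZ₂ hQ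
end

section
/- Let G be a compact Lie group and A ⊆ G a closed abelian subgroup. If G is strongly acceptable (any two element-conjugate homomorphisms from a compact group into G are globally conjugate), then the centralizer Z_G(A) is strongly acceptable. -/
universe w

theorem ChartedSpace.small_of_compactSpace (H : Type*) {M : Type*} [TopologicalSpace H]
    [TopologicalSpace M] [ChartedSpace H M] [CompactSpace M] [Small.{w} H] : Small.{w} M := by
  obtain ⟨s, hs⟩ := isCompact_univ.elim_finite_subcover (fun x : M ↦ (chartAt H x).source)
    (fun x ↦ (chartAt H x).open_source) (fun x _ ↦ Set.mem_iUnion.2 ⟨x, mem_chart_source H x⟩)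
  have (x : M) : Small.{w} (chartAt H x).source :=
    small_of_injective (Set.injOn_iff_injective.1 (chartAt H x).injOn)
  rw [← small_univ_iff]
  exact small_subset hs

theorem IsStronglyAcceptable.exists_eq_conj_of_small {G : Type*} [Group G]
    (hG : IsStronglyAcceptable G) {K : Type*} [Group K] [TopologicalSpace K]
    [IsTopologicalGroup K] [CompactSpace K] [Small.{0} K] (φ₁ φ₂ : K →* G)
    (h : ∀ x, IsConj (φ₁ x) (φ₂ x)) : ∃ g : G, ∀ x, φ₂ x = g * φ₁ x * g⁻¹ := by
  let e : Shrink.{0} K ≃ₜ* K :=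
    { Shrink.mulEquiv with
      continuous_toFun := (Shrink.homeomorph K).symm.continuous
      continuous_invFun := (Shrink.homeomorph K).continuous }
  have := e.isTopologicalGroup
  have := (Shrink.homeomorph K).compactSpace
  obtain ⟨g, hg⟩ := hG (Shrink.{0} K) (φ₁.comp e.toMonoidHom) (φ₂.comp e.toMonoidHom)
    fun x ↦ h (e x)
  exact ⟨g, e.surjective.forall.2 hg⟩

theorem IsStronglyAcceptable.centralizer_of_isCompact {G : Type*} [Group G]
    [TopologicalSpace G] [IsTopologicalGroup G] (hG : IsStronglyAcceptable G) (A : Subgroup G)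
    (hA : IsCompact (A : Set G)) [Small.{0} A] :
    IsStronglyAcceptable (Subgroup.centralizer (A : Set G)) := by
  intro Γ _ _ _ _ φ₁ φ₂ hconj
  have := isCompact_iff_compactSpace.1 hA
  let extend (φ : Γ →* Subgroup.centralizer (A : Set G)) : Γ × A →* G :=
    ((Subgroup.centralizer _).subtype.comp φ).noncommCoprod A.subtype
      fun x a ↦ ((φ x).2 a a.2).symm
  have extend_apply (φ) (x : Γ) (a : A) : extend φ (x, a) = φ x * a := rfl
  have extend_conj (p : Γ × A) : IsConj (extend φ₁ p) (extend φ₂ p) := by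
    obtain ⟨x, a⟩ := p
    obtain ⟨c, hc⟩ := isConj_iff.1 (hconj x)
    have hca : (c : G) * a * (c : G)⁻¹ = a := by rw [← c.2 a a.2, mul_inv_cancel_right]
    refine isConj_iff.2 ⟨c, ?_⟩
    calc (c : G) * (φ₁ x * a) * (c : G)⁻¹ = ↑(c * φ₁ x * c⁻¹) * (c * a * (c : G)⁻¹) := by
          push_cast; group
      _ = φ₂ x * a := by rw [hc, hca]
  obtain ⟨g, hg⟩ := hG.exists_eq_conj_of_small (extend φ₁) (extend φ₂) extend_conj
  have hgZ : g ∈ Subgroup.centralizer (A : Set G) := Subgroup.mem_centralizer_iff.2 fun a ha ↦ by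
    have hga : a = g * a * g⁻¹ := by simpa [extend_apply] using hg (1, ⟨a, ha⟩)
    exact (mul_inv_eq_iff_eq_mul.1 hga.symm).symm
  exact ⟨⟨g, hgZ⟩, fun x ↦ Subtype.ext (by simpa [extend_apply] using hg (x, 1))⟩

open scoped Manifold

theorem stronglyAcceptable_centralizer_general
    {E : Type*} [NormedAddCommGroup E] [NormedSpace ℝ E]
    {G : Type*} [Group G] [TopologicalSpace G] [IsTopologicalGroup G]
    [ChartedSpace E G] [CompactSpace G]
    (A : Subgroup G) (hAclosed : IsClosed (A : Set G))
    (hG : IsStronglyAcceptable G) :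
    IsStronglyAcceptable (Subgroup.centralizer (A : Set G)) := by
  have : FiniteDimensional ℝ E := .of_locallyCompact_manifold G 𝓘(ℝ, E)
  have : Small.{0} E := Module.Finite.small ℝ E
  have : Small.{0} G := ChartedSpace.small_of_compactSpace E
  exact hG.centralizer_of_isCompact A hAclosed.isCompact

/-- If a compact Lie group `G` is strongly acceptable and `A` is a closed
abelian subgroup, then the centralizer `Z_G(A)` is strongly acceptable. -/
theorem stronglyAcceptable_centralizer
    {E : Type*} [NormedAddCommGroup E] [NormedSpace ℝ E]
    {G : Type*} [Group G] [TopologicalSpace G] [IsTopologicalGroup G]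
    [ChartedSpace E G] [LieGroup 𝓘(ℝ, E) (⊤ : ℕ∞) G] [CompactSpace G]
    (A : Subgroup G) (hAclosed : IsClosed (A : Set G))
    (hAabelian : ∀ x ∈ A, ∀ y ∈ A, x * y = y * x)
    (hG : IsStronglyAcceptable G) :
    IsStronglyAcceptable (Subgroup.centralizer (A : Set G)) :=
  stronglyAcceptable_centralizer_general (E := E) A hAclosed hG
end

section
/- Let G be a compact Lie group and H ⊆ G a closed subgroup. Then H strongly controls its fusion in G if and only if for every g ∈ G, g lies in the product set Z_G(H ∩ gHg⁻¹) · H. -/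
open scoped Manifold Pointwise

/-
If `g = z * h` with `z` centralizing `H ∩ gHg⁻¹` and `h ∈ H`, then `h` and `g` induce the same
conjugation on `H ∩ g⁻¹Hg`, so `h` realizes any `G`-fusion by `g`; conversely such an `h` gives
the decomposition `g = (g * h⁻¹) * h`. Applied to the compact group `Γ = H ∩ g⁻¹Hg` (closed in
the compact group `G`), with its inclusion and its conjugation by `g` into `H`, strong control of
fusion provides such an `h`. The only obstacle is that `Γ` must live in `Type`: a compact manifold
over a normed space forces the model to be locally compact, hence finite dimensional, so `G` is
second countable and thus small.
-/

universe u v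

open Topology

open TopologicalSpace in
theorem small_of_secondCountableTopology (X : Type u) [TopologicalSpace X]
    [SecondCountableTopology X] [T0Space X] : Small.{v} X := by
  let f : X → Set (countableBasis X) := fun x ↦ {s | x ∈ (s : Set X)}
  have mem_of_eq {a b : X} {s : Set X} (hs : IsOpen s) (hab : f a = f b) (ha : a ∈ s) : b ∈ s := by
    obtain ⟨t, ht, hat, hts⟩ := (isBasis_countableBasis X).exists_subset_of_mem_open ha hs
    exact hts ((Set.ext_iff.1 hab ⟨t, ht⟩).1 hat)
  refine small_of_injective (f := f) fun x y hxy ↦ Inseparable.eq ?_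
  exact inseparable_iff_forall_isOpen.2 fun s hs ↦ ⟨mem_of_eq hs hxy, mem_of_eq hs hxy.symm⟩

theorem ChartedSpace.locallyCompactSpace_model (E : Type*) [AddGroup E] [TopologicalSpace E]
    [IsTopologicalAddGroup E] (M : Type*) [TopologicalSpace M] [ChartedSpace E M]
    [LocallyCompactSpace M] [Nonempty M] : LocallyCompactSpace E := by
  obtain ⟨x⟩ := ‹Nonempty M›
  set c := chartAt E x
  obtain ⟨K, hKx, hKc, hK⟩ := local_compact_nhds (c.open_source.mem_nhds (mem_chart_source E x))
  have hcK : c '' K ∈ 𝓝 (c x) := by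
    rw [← c.map_nhds_eq (mem_chart_source E x)]
    exact Filter.image_mem_map hKx
  have hcKc : IsCompact (c '' K) := hK.image_of_continuousOn (c.continuousOn.mono hKc)
  exact hcKc.locallyCompactSpace_of_mem_nhds_of_addGroup hcK

theorem ChartedSpace.small_of_sigmaCompactSpace (E : Type*) [NormedAddCommGroup E]
    [NormedSpace ℝ E] (M : Type u) [TopologicalSpace M] [ChartedSpace E M] [T0Space M]
    [LocallyCompactSpace M] [SigmaCompactSpace M] : Small.{v} M := by
  cases isEmpty_or_nonempty M
  · exact Countable.toSmall M
  have := ChartedSpace.locallyCompactSpace_model E M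
  have := FiniteDimensional.of_locallyCompactSpace ℝ (E := E)
  have := ChartedSpace.secondCountable_of_sigmaCompact E M
  exact small_of_secondCountableTopology M

namespace Subgroup

variable {G : Type*} [Group G]

theorem mem_centralizer_inf_map_conj_mul_iff (H : Subgroup G) (g : G) :
    g ∈ (centralizer ((H ⊓ H.map (MulAut.conj g).toMonoidHom : Subgroup G) : Set G) : Set G)
        * (H : Set G) ↔
      ∃ h ∈ H, ∀ x ∈ H, g * x * g⁻¹ ∈ H → h * x * h⁻¹ = g * x * g⁻¹ := by
  constructor
  · rintro ⟨z, hz, h, hh, rfl⟩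
    refine ⟨h, hh, fun x hx hgx ↦ ?_⟩
    have hmem : z * h * x * (z * h)⁻¹ ∈ H ⊓ H.map (MulAut.conj (z * h)).toMonoidHom :=
      ⟨hgx, x, hx, rfl⟩
    have hcomm := mem_centralizer_iff.1 hz _ hmem
    calc h * x * h⁻¹ = z⁻¹ * (z * h * x * (z * h)⁻¹ * z) := by group
      _ = z * h * x * (z * h)⁻¹ := by rw [hcomm]; group
  · rintro ⟨h, hh, hconj⟩
    refine ⟨g * h⁻¹, mem_centralizer_iff.2 ?_, h, hh, by group⟩
    rintro _ ⟨hy, x, hx, rfl⟩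
    have := hconj x hx hy
    simp only [MulEquiv.coe_toMonoidHom, MulAut.conj_apply]
    calc g * x * g⁻¹ * (g * h⁻¹) = g * h⁻¹ * (h * x * h⁻¹) := by group
      _ = g * h⁻¹ * (g * x * g⁻¹) := by rw [this]

end Subgroup

namespace StronglyControlsFusion

variable {G : Type*} [Group G] {H : Subgroup G}

theorem exists_conj_of_small (hH : StronglyControlsFusion H) {Γ : Type*} [Group Γ]
    [TopologicalSpace Γ] [IsTopologicalGroup Γ] [CompactSpace Γ] [Small.{0} Γ]
    (φ₁ φ₂ : Γ →* H) (g : G) (hg : ∀ x, (φ₂ x : G) = g * φ₁ x * g⁻¹) :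
    ∃ h : H, ∀ x, φ₂ x = h * φ₁ x * h⁻¹ := by
  let e : Shrink.{0} Γ ≃* Γ := Shrink.mulEquiv
  have he : IsInducing e := (Shrink.homeomorph Γ).symm.isInducing
  have : IsTopologicalGroup (Shrink.{0} Γ) := he.topologicalGroup e
  have : CompactSpace (Shrink.{0} Γ) := (Shrink.homeomorph Γ).compactSpace
  obtain ⟨h, hh⟩ := hH (Shrink.{0} Γ) (φ₁.comp e.toMonoidHom) (φ₂.comp e.toMonoidHom)
    ⟨g, fun x ↦ hg (e x)⟩
  exact ⟨h, fun x ↦ by simpa using hh (e.symm x)⟩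

theorem exists_conj_eq [TopologicalSpace G] [IsTopologicalGroup G] [CompactSpace G]
    [Small.{0} G] (hH : StronglyControlsFusion H) (hHc : IsClosed (H : Set G)) (g : G) :
    ∃ h ∈ H, ∀ x ∈ H, g * x * g⁻¹ ∈ H → h * x * h⁻¹ = g * x * g⁻¹ := by
  let K : Subgroup G := H ⊓ H.comap (MulAut.conj g).toMonoidHom
  have hKc : IsClosed (K : Set G) :=
    hHc.inter (hHc.preimage ((continuous_const_mul g).mul continuous_const))
  have : CompactSpace K := isCompact_iff_compactSpace.1 hKc.isCompact
  let φ₂ : K →* H := ((MulAut.conj g).toMonoidHom.comp K.subtype).codRestrict H fun x ↦ x.2.2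
  obtain ⟨h, hh⟩ := hH.exists_conj_of_small (Subgroup.inclusion inf_le_left) φ₂ g fun _ ↦ rfl
  exact ⟨h, h.2, fun x hx hgx ↦ (congrArg Subtype.val (hh ⟨x, hx, hgx⟩)).symm⟩

theorem of_forall_exists_conj_eq
    (hH : ∀ g : G, ∃ h ∈ H, ∀ x ∈ H, g * x * g⁻¹ ∈ H → h * x * h⁻¹ = g * x * g⁻¹) :
    StronglyControlsFusion H := by
  rintro Γ _ _ _ _ φ₁ φ₂ ⟨g, hg⟩
  obtain ⟨h, hh, hconj⟩ := hH g
  refine ⟨⟨h, hh⟩, fun x ↦ Subtype.ext ?_⟩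
  rw [hg]
  exact (hconj _ (φ₁ x).2 (hg x ▸ (φ₂ x).2)).symm

end StronglyControlsFusion

theorem stronglyControlsFusion_iff_general
    {E : Type*} [NormedAddCommGroup E] [NormedSpace ℝ E]
    {G : Type*} [Group G] [TopologicalSpace G] [IsTopologicalGroup G]
    [ChartedSpace E G] [CompactSpace G]
    (H : Subgroup G) (hHclosed : IsClosed (H : Set G)) :
    StronglyControlsFusion H ↔
      ∀ g : G,
        g ∈ (Subgroup.centralizer
              ((H ⊓ Subgroup.map (MulAut.conj g).toMonoidHom H : Subgroup G) : Set G) : Set G)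
            * (H : Set G) := by
  have : T1Space G := ChartedSpace.t1Space E G
  have : Small.{0} G := ChartedSpace.small_of_sigmaCompactSpace E G
  simp only [Subgroup.mem_centralizer_inf_map_conj_mul_iff]
  exact ⟨fun hH ↦ hH.exists_conj_eq hHclosed, StronglyControlsFusion.of_forall_exists_conj_eq⟩

/-- `H` strongly controls its fusion in the compact Lie group `G` iff for
every `g ∈ G` one has `g ∈ Z_G(H ∩ gHg⁻¹) · H`. -/
theorem stronglyControlsFusion_iff
    {E : Type*} [NormedAddCommGroup E] [NormedSpace ℝ E]
    {G : Type*} [Group G] [TopologicalSpace G] [IsTopologicalGroup G]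
    [ChartedSpace E G] [LieGroup 𝓘(ℝ, E) (⊤ : ℕ∞) G] [CompactSpace G]
    (H : Subgroup G) (hHclosed : IsClosed (H : Set G)) :
    StronglyControlsFusion H ↔
      ∀ g : G,
        g ∈ (Subgroup.centralizer
              ((H ⊓ Subgroup.map (MulAut.conj g).toMonoidHom H : Subgroup G) : Set G) : Set G)
            * (H : Set G) :=
  stronglyControlsFusion_iff_general (E := E) H hHclosed
end

section
/- Let G be a connected compact Lie group, θ an involutive automorphism of G, H = G^θ the fixed-point subgroup, and 𝔭₀ the (-1)-eigenspace of dθ on the Lie algebra of G. Then for every g ∈ exp(𝔭₀), H ∩ gHg⁻¹ = H ∩ Z_G(g²), i.e., the intersection of H with its conjugate by g equals the centralizer of g² in H. -/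
open Matrix
open scoped Pointwise

/-- The Lie algebra of a matrix group `G ⊆ GL(n, ℝ)`: all matrices whose one-parameter
exponential subgroup lies in `G`. -/
def lieAlgOf {n : ℕ} (G : Subgroup (GL (Fin n) ℝ)) : Set (Matrix (Fin n) (Fin n) ℝ) :=
  {X | ∀ t : ℝ, ∃ u ∈ G, (↑u : Matrix (Fin n) (Fin n) ℝ) = NormedSpace.exp (t • X)}

/-- The fixed-point subgroup `G^θ` of an automorphism `θ` preserving `G`. -/
def fixedSubgroup {n : ℕ} (G : Subgroup (GL (Fin n) ℝ))
    (θ : GL (Fin n) ℝ ≃* GL (Fin n) ℝ) (hθG : ∀ x, x ∈ G ↔ θ x ∈ G) :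
    Subgroup (GL (Fin n) ℝ) where
  carrier := {x | x ∈ G ∧ θ x = x}
  one_mem' := ⟨G.one_mem, map_one θ⟩
  mul_mem' := fun ha hb => ⟨G.mul_mem ha.1 hb.1, by rw [_root_.map_mul, ha.2, hb.2]⟩
  inv_mem' := fun ha => ⟨G.inv_mem ha.1, by rw [_root_.map_inv, ha.2]⟩

/-! For `g = exp X` with `dθ X = -X` we get `θ g = exp (-X) = g⁻¹`, and from there the statement
is pure group theory: for `x ∈ H`, the element
`g⁻¹ x g` lies in `H` iff it is `θ`-fixed, and `θ (g⁻¹ x g) = g x g⁻¹`. -/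

theorem mul_mul_inv_eq_inv_mul_mul_iff_commute_sq {M : Type*} [Group M] (g x : M) :
    g * x * g⁻¹ = g⁻¹ * x * g ↔ Commute x (g ^ 2) := by
  rw [Commute, SemiconjBy, pow_two]
  constructor <;> intro h
  · calc x * (g * g) = g * (g⁻¹ * x * g) * g := by group
      _ = g * (g * x * g⁻¹) * g := by rw [h]
      _ = g * g * x := by group
  · calc g * x * g⁻¹ = g⁻¹ * (g * g * x) * g⁻¹ := by group
      _ = g⁻¹ * (x * (g * g)) * g⁻¹ := by rw [h]
      _ = g⁻¹ * x * g := by group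

theorem mem_and_mem_map_conj_iff_commute_sq {M : Type*} [Group M] {θ : M →* M}
    {K H : Subgroup M} (hH : ∀ y, y ∈ H ↔ y ∈ K ∧ θ y = y) {g : M} (hgK : g ∈ K)
    (hθg : θ g = g⁻¹) (x : M) :
    (x ∈ H ∧ x ∈ H.map (MulAut.conj g).toMonoidHom) ↔ (x ∈ H ∧ Commute x (g ^ 2)) := by
  rw [Subgroup.mem_map_equiv, MulAut.conj_symm_apply]
  refine and_congr_right fun hxH => ?_
  obtain ⟨hxK, hθx⟩ := (hH x).1 hxH
  have hconjK : g⁻¹ * x * g ∈ K := K.mul_mem (K.mul_mem (K.inv_mem hgK) hxK) hgK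
  rw [hH, ← mul_mul_inv_eq_inv_mul_mul_iff_commute_sq]
  simp only [hconjK, true_and, map_mul, map_inv, hθg, hθx, inv_inv]

theorem units_eq_inv_of_val_eq_exp_neg {m 𝔸 : Type*} [Fintype m] [DecidableEq m]
    [NormedCommRing 𝔸] [NormedAlgebra ℚ 𝔸] [CompleteSpace 𝔸] {u v : GL m 𝔸}
    {X : Matrix m m 𝔸} (hu : u.val = NormedSpace.exp (-X))
    (hv : v.val = NormedSpace.exp X) : u = v⁻¹ :=
  Units.ext <| by rw [hu, Matrix.exp_neg, ← hv, Matrix.coe_units_inv]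

theorem inter_conj_eq_centralizer_sq_general {n : ℕ} (G : Subgroup (GL (Fin n) ℝ))
    (θ : GL (Fin n) ℝ ≃* GL (Fin n) ℝ)
    (hθG : ∀ x, x ∈ G ↔ θ x ∈ G)
    (dθ : Matrix (Fin n) (Fin n) ℝ →ₗ[ℝ] Matrix (Fin n) (Fin n) ℝ)
    (hdθ : ∀ X ∈ lieAlgOf G, ∀ u : GL (Fin n) ℝ,
      u.val = NormedSpace.exp X → (θ u).val = NormedSpace.exp (dθ X))
    (g : GL (Fin n) ℝ) (hgG : g ∈ G)
    (hgexp : ∃ X ∈ {X ∈ lieAlgOf G | dθ X = -X}, g.val = NormedSpace.exp X) :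
    ∀ x : GL (Fin n) ℝ,
      (x ∈ fixedSubgroup G θ hθG ∧
        x ∈ Subgroup.map (MulAut.conj g).toMonoidHom (fixedSubgroup G θ hθG)) ↔
      (x ∈ fixedSubgroup G θ hθG ∧ Commute x (g ^ 2)) := by
  obtain ⟨X, ⟨hXG, hXθ⟩, hgX⟩ := hgexp
  have hθg : θ g = g⁻¹ :=
    units_eq_inv_of_val_eq_exp_neg (by rw [hdθ X hXG g hgX, hXθ]) hgX
  exact mem_and_mem_map_conj_iff_commute_sq (θ := θ.toMonoidHom) (K := G)
    (fun _ => Iff.rfl) hgG hθg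

/-- If `θ` is an involutive automorphism of the connected compact group
`G` with fixed subgroup `H = G^θ` and `𝔭₀` is the `(-1)`-eigenspace of `dθ`, then for every
`g ∈ exp 𝔭₀` one has `H ∩ gHg⁻¹ = H ∩ Z_G(g²)`. -/
theorem inter_conj_eq_centralizer_sq {n : ℕ} (G : Subgroup (GL (Fin n) ℝ))
    (hGcompact : IsCompact (G : Set (GL (Fin n) ℝ)))
    (hGconn : IsConnected (G : Set (GL (Fin n) ℝ)))
    (θ : GL (Fin n) ℝ ≃* GL (Fin n) ℝ)
    (hθG : ∀ x, x ∈ G ↔ θ x ∈ G)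
    (hθ₂ : ∀ x, θ (θ x) = x)
    (dθ : Matrix (Fin n) (Fin n) ℝ →ₗ[ℝ] Matrix (Fin n) (Fin n) ℝ)
    (hdθ : ∀ X ∈ lieAlgOf G, ∀ u : GL (Fin n) ℝ,
      u.val = NormedSpace.exp X → (θ u).val = NormedSpace.exp (dθ X))
    (g : GL (Fin n) ℝ) (hgG : g ∈ G)
    (hgexp : ∃ X ∈ {X ∈ lieAlgOf G | dθ X = -X}, g.val = NormedSpace.exp X) :
    ∀ x : GL (Fin n) ℝ,
      (x ∈ fixedSubgroup G θ hθG ∧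
        x ∈ Subgroup.map (MulAut.conj g).toMonoidHom (fixedSubgroup G θ hθG)) ↔
      (x ∈ fixedSubgroup G θ hθG ∧ Commute x (g ^ 2)) :=
  inter_conj_eq_centralizer_sq_general G θ hθG dθ hdθ g hgG hgexp
end
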